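/- Let h ∈ L¹(ℂ²;ℂ) and let K_h be the associated two-particle Töplitz kernel. Then for all x₁,x₂,y₁,y₂ ∈ ℝ, K_h(x₁,x₂;y₂,y₁) = (2πℏ)^{−2} ∫_{ℂ²} h(z₁,z₂) exp(−|z₁−z₂|²/(2ℏ)) Φ_{z₁, conj(z₂)}(x₁,y₁) Φ_{z₂, conj(z₁)}(x₂,y₂) dz₁ dz₂. That is, the kernel of U_{1↔2} applied to a Töplitz operator is given by the Gaussian weight e^{−|z₁−z₂|²/2ℏ} times the analytically continued coherent projectors in which the holomorphic variables z₁, z₂ are paired with the exchanged antiholomorphic variables conj(z₂), conj(z₁). (Töplitz exchange lemma, U-version.) -/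
import Mathlib

open MeasureTheory Complex

/-- One-dimensional coherent state `ψ_z`, `z = q + ip`. -/
noncomputable def cs (ℏ : ℝ) (z : ℂ) (x : ℝ) : ℂ :=
  (((Real.pi * ℏ) ^ (-(1 : ℝ) / 4) : ℝ) : ℂ) *
    Complex.exp (-(((x - z.re : ℝ) : ℂ)) ^ 2 / (2 * (ℏ : ℂ))) *
    Complex.exp (Complex.I * (z.im : ℂ) * (x : ℂ) / (ℏ : ℂ))

/-- Analytically continued coherent projector kernel `Φ_{a,b}(x,y)`. -/
noncomputable def Phi (ℏ : ℝ) (a b : ℂ) (x y : ℝ) : ℂ :=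
  (((Real.pi * ℏ) ^ (-(1 : ℝ) / 2) : ℝ) : ℂ) *
    Complex.exp (-((x ^ 2 + y ^ 2 : ℝ) : ℂ) / (2 * (ℏ : ℂ))) *
    Complex.exp ((a * (x : ℂ) + b * (y : ℂ)) / (ℏ : ℂ)) *
    Complex.exp (-(a + b) ^ 2 / (4 * (ℏ : ℂ)))

/-- Two-particle Töplitz kernel of the symbol `h`. -/
noncomputable def K2 (ℏ : ℝ) (h : ℂ × ℂ → ℂ) (x1 x2 y1 y2 : ℝ) : ℂ :=
  ((((2 * Real.pi * ℏ) ^ 2)⁻¹ : ℝ) : ℂ) * ∫ z : ℂ × ℂ,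
    h z * cs ℏ z.1 x1 * cs ℏ z.2 x2 *
      (starRingEnd ℂ) (cs ℏ z.1 y1) * (starRingEnd ℂ) (cs ℏ z.2 y2)

lemma key (ℏ : ℝ) (hℏ : 0 < ℏ) (z1 z2 : ℂ) (x1 x2 y1 y2 : ℝ) :
    cs ℏ z1 x1 * cs ℏ z2 x2 * (starRingEnd ℂ) (cs ℏ z1 y2) * (starRingEnd ℂ) (cs ℏ z2 y1)
    = Complex.exp (-((Complex.normSq (z1 - z2) : ℝ) : ℂ) / (2 * (ℏ : ℂ))) *
        Phi ℏ z1 ((starRingEnd ℂ) z2) x1 y1 * Phi ℏ z2 ((starRingEnd ℂ) z1) x2 y2 := by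
  set q1 := z1.re with hq1
  set p1 := z1.im with hp1
  set q2 := z2.re with hq2
  set p2 := z2.im with hp2
  have L : cs ℏ z1 x1 * cs ℏ z2 x2 * (starRingEnd ℂ) (cs ℏ z1 y2) * (starRingEnd ℂ) (cs ℏ z2 y1)
      = ((((Real.pi * ℏ) ^ (-(1:ℝ)/4)) ^ 4 : ℝ) : ℂ) *
        Complex.exp (
          -((x1 - q1 : ℝ) : ℂ) ^ 2 / (2 * (ℏ:ℂ)) + Complex.I * (p1:ℂ) * (x1:ℂ) / (ℏ:ℂ)
          + -((x2 - q2 : ℝ) : ℂ) ^ 2 / (2 * (ℏ:ℂ)) + Complex.I * (p2:ℂ) * (x2:ℂ) / (ℏ:ℂ)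
          + -((y2 - q1 : ℝ) : ℂ) ^ 2 / (2 * (ℏ:ℂ)) + -Complex.I * (p1:ℂ) * (y2:ℂ) / (ℏ:ℂ)
          + -((y1 - q2 : ℝ) : ℂ) ^ 2 / (2 * (ℏ:ℂ)) + -Complex.I * (p2:ℂ) * (y1:ℂ) / (ℏ:ℂ)) := by
    simp only [cs, map_mul, ← Complex.exp_conj, map_div₀, map_neg, map_pow, map_add,
      Complex.conj_ofReal, Complex.conj_I, map_ofNat, Complex.exp_add, Complex.ofReal_pow]
    ring
  have R : Complex.exp (-((Complex.normSq (z1 - z2) : ℝ) : ℂ) / (2 * (ℏ : ℂ))) *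
        Phi ℏ z1 ((starRingEnd ℂ) z2) x1 y1 * Phi ℏ z2 ((starRingEnd ℂ) z1) x2 y2
      = ((((Real.pi * ℏ) ^ (-(1:ℝ)/2)) ^ 2 : ℝ) : ℂ) *
        Complex.exp (
          -((Complex.normSq (z1 - z2) : ℝ) : ℂ) / (2 * (ℏ:ℂ))
          + -((x1 ^ 2 + y1 ^ 2 : ℝ) : ℂ) / (2 * (ℏ:ℂ))
          + (z1 * (x1:ℂ) + (starRingEnd ℂ) z2 * (y1:ℂ)) / (ℏ:ℂ)
          + -(z1 + (starRingEnd ℂ) z2) ^ 2 / (4 * (ℏ:ℂ))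
          + -((x2 ^ 2 + y2 ^ 2 : ℝ) : ℂ) / (2 * (ℏ:ℂ))
          + (z2 * (x2:ℂ) + (starRingEnd ℂ) z1 * (y2:ℂ)) / (ℏ:ℂ)
          + -(z2 + (starRingEnd ℂ) z1) ^ 2 / (4 * (ℏ:ℂ))) := by
    simp only [Phi, Complex.exp_add, Complex.ofReal_pow]
    ring
  rw [L, R]
  have hpre : (((Real.pi * ℏ) ^ (-(1:ℝ)/4)) ^ 4 : ℝ) = (((Real.pi * ℏ) ^ (-(1:ℝ)/2)) ^ 2 : ℝ) := by
    have hp : (0:ℝ) < Real.pi * ℏ := mul_pos Real.pi_pos hℏ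
    rw [← Real.rpow_natCast _ 4, ← Real.rpow_natCast _ 2, ← Real.rpow_mul hp.le,
      ← Real.rpow_mul hp.le]
    norm_num
  rw [hpre]
  congr 1
  have h1 : z1 = (q1 : ℂ) + (p1 : ℂ) * Complex.I := (Complex.re_add_im z1).symm
  have h2 : z2 = (q2 : ℂ) + (p2 : ℂ) * Complex.I := (Complex.re_add_im z2).symm
  have hn : ((Complex.normSq (z1 - z2) : ℝ) : ℂ)
      = (((q1 - q2)^2 + (p1 - p2)^2 : ℝ) : ℂ) := by
    have : Complex.normSq (z1 - z2) = (q1 - q2)^2 + (p1 - p2)^2 := by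
      simp only [Complex.normSq_apply, Complex.sub_re, Complex.sub_im, ← hq1, ← hp1, ← hq2, ← hp2]
      ring
    exact_mod_cast congrArg (fun r : ℝ => (r : ℂ)) this
  rw [hn, h1, h2]
  simp only [map_add, map_mul, Complex.conj_ofReal, Complex.conj_I]
  congr 1
  push_cast
  linear_combination (((p1:ℂ) - p2)^2 / (2 * (ℏ:ℂ))) * Complex.I_sq

theorem toeplitz_exchange_U (ℏ : ℝ) (hℏ : 0 < ℏ)
    (h : ℂ × ℂ → ℂ) (hh : Integrable h volume)
    (x1 x2 y1 y2 : ℝ) :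
    K2 ℏ h x1 x2 y2 y1 =
      ((((2 * Real.pi * ℏ) ^ 2)⁻¹ : ℝ) : ℂ) * ∫ z : ℂ × ℂ,
        h z * Complex.exp (-((Complex.normSq (z.1 - z.2) : ℝ) : ℂ) / (2 * (ℏ : ℂ))) *
          Phi ℏ z.1 ((starRingEnd ℂ) z.2) x1 y1 *
          Phi ℏ z.2 ((starRingEnd ℂ) z.1) x2 y2 := by
  unfold K2
  congr 1
  congr 1
  funext z
  calc h z * cs ℏ z.1 x1 * cs ℏ z.2 x2 * (starRingEnd ℂ) (cs ℏ z.1 y2) *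
        (starRingEnd ℂ) (cs ℏ z.2 y1)
      = h z * (cs ℏ z.1 x1 * cs ℏ z.2 x2 * (starRingEnd ℂ) (cs ℏ z.1 y2) *
        (starRingEnd ℂ) (cs ℏ z.2 y1)) := by ring
    _ = h z * (Complex.exp (-((Complex.normSq (z.1 - z.2) : ℝ) : ℂ) / (2 * (ℏ : ℂ))) *
        Phi ℏ z.1 ((starRingEnd ℂ) z.2) x1 y1 * Phi ℏ z.2 ((starRingEnd ℂ) z.1) x2 y2) := by
        rw [key ℏ hℏ z.1 z.2 x1 x2 y1 y2]
    _ = _ := by ring
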